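/- arXiv:2404.08920 — 3 statements merged into one kernel-verified Lean document; each statement's English description precedes it below -/
import Mathlib

section
/- Let m > 0 and t > 0 be real numbers. Then the sum over all integers j of (sqrt(t) * 2^j)^m * exp(-(1/2) * sqrt(t) * 2^j) is bounded by C_m := 1/(1 - 2^(-m)) + (8m)^m / (1 - exp(-1/8)), a constant independent of t. -/
/-!
Write `x_j = √t · 2^j`. Shifting `j` by the integer `n` with `√t ∈ [2^n, 2^(n+1))` reduces the claim to
`x_j = c · 2^j` with `c ∈ [1, 2)`. For `j = k ≥ 0` we have `x_j ≥ k`, and splitting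
`e^{-x/2} = e^{-x/8} e^{-3x/8}` together with `x^m e^{-x/8} ≤ (8m)^m` (from `log y ≤ y - 1`) bounds the
term by `(8m)^m (e^{-1/8})^k`. For `j = -(k+1)` we have `x_j ≤ 2^{-k}`, so the term is at most
`x_j^m ≤ (2^{-m})^k`. Both majorants are geometric series with the sums appearing in the bound.
-/

open Real

theorem summable_and_tsum_le_of_geometric_bounds {f : ℤ → ℝ} {A B r s : ℝ} (hf : ∀ n, 0 ≤ f n)
    (hr₀ : 0 ≤ r) (hr₁ : r < 1) (hs₀ : 0 ≤ s) (hs₁ : s < 1)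
    (hnat : ∀ k : ℕ, f k ≤ A * r ^ k) (hneg : ∀ k : ℕ, f (-(k + 1)) ≤ B * s ^ k) :
    Summable f ∧ ∑' n, f n ≤ A / (1 - r) + B / (1 - s) := by
  have hA := (hasSum_geometric_of_lt_one hr₀ hr₁).mul_left A
  have hB := (hasSum_geometric_of_lt_one hs₀ hs₁).mul_left B
  have h₁ : Summable fun k : ℕ => f k := .of_nonneg_of_le (fun k => hf k) hnat hA.summable
  have h₂ : Summable fun k : ℕ => f (-(k + 1)) :=
    .of_nonneg_of_le (fun k => hf _) hneg hB.summable
  refine ⟨.of_nat_of_neg_add_one h₁ h₂, ?_⟩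
  rw [tsum_of_nat_of_neg_add_one h₁ h₂, div_eq_mul_inv, div_eq_mul_inv, ← hA.tsum_eq,
    ← hB.tsum_eq]
  exact add_le_add (h₁.tsum_le_tsum hnat hA.summable) (h₂.tsum_le_tsum hneg hB.summable)

theorem rpow_mul_exp_neg_div_eight_le {m x : ℝ} (hm : 0 < m) (hx : 0 < x) :
    x ^ m * exp (-(x / 8)) ≤ (8 * m) ^ m := by
  have h8m : 0 < 8 * m := by positivity
  rw [rpow_def_of_pos hx, rpow_def_of_pos h8m, ← exp_add, exp_le_exp]
  have hlog : log (x / (8 * m)) ≤ x / (8 * m) - 1 := log_le_sub_one_of_pos (by positivity)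
  rw [log_div hx.ne' h8m.ne'] at hlog
  have hkey : m * (x / (8 * m) - 1) = x / 8 - m := by field_simp
  linarith [mul_le_mul_of_nonneg_left hlog hm.le]

theorem rpow_mul_exp_neg_half_le_of_natCast_le {m x : ℝ} (hm : 0 < m) (hx : 0 < x) {k : ℕ}
    (hk : (k : ℝ) ≤ x) :
    x ^ m * exp (-(x / 2)) ≤ (8 * m) ^ m * exp (-1 / 8) ^ k := by
  have hsplit : x ^ m * exp (-(x / 2)) = x ^ m * exp (-(x / 8)) * exp (-(3 * x / 8)) := by
    rw [mul_assoc, ← exp_add]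
    ring_nf
  rw [hsplit, ← exp_nat_mul]
  gcongr
  · exact rpow_mul_exp_neg_div_eight_le hm hx
  · linarith

theorem rpow_mul_exp_neg_half_le_of_le_inv_two_pow {m x : ℝ} (hm : 0 ≤ m) (hx : 0 ≤ x) {k : ℕ}
    (hk : x ≤ (2 ^ k)⁻¹) :
    x ^ m * exp (-(x / 2)) ≤ (2 ^ (-m)) ^ k :=
  calc x ^ m * exp (-(x / 2)) ≤ x ^ m :=
        mul_le_of_le_one_right (by positivity) (exp_le_one_iff.2 (by linarith))
    _ ≤ ((2 ^ k)⁻¹) ^ m := by gcongr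
    _ = (2 ^ (-m)) ^ k := by
        rw [← rpow_natCast, ← rpow_natCast, ← rpow_neg_one, ← rpow_mul, ← rpow_mul, ← rpow_mul]
          <;> norm_num
        ring_nf

theorem summable_and_tsum_rpow_mul_exp_neg_half_le_of_mem_Ico {m c : ℝ} (hm : 0 < m)
    (hc : c ∈ Set.Ico 1 2) :
    Summable (fun j : ℤ => (c * 2 ^ j) ^ m * exp (-(c * 2 ^ j / 2))) ∧
      ∑' j : ℤ, (c * 2 ^ j) ^ m * exp (-(c * 2 ^ j / 2)) ≤
        1 / (1 - 2 ^ (-m)) + (8 * m) ^ m / (1 - exp (-1 / 8)) := by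
  obtain ⟨hc₁, hc₂⟩ := hc
  have hc₀ : 0 < c := one_pos.trans_le hc₁
  rw [add_comm]
  refine summable_and_tsum_le_of_geometric_bounds (fun j => by positivity) (exp_pos _).le
    (exp_lt_one_iff.2 (by norm_num)) (by positivity)
    (rpow_lt_one_of_one_lt_of_neg one_lt_two (by linarith)) (fun k => ?_) (fun k => ?_)
  · refine rpow_mul_exp_neg_half_le_of_natCast_le hm (by positivity) ?_
    have hk : (k : ℝ) < 2 ^ k := by exact_mod_cast Nat.lt_two_pow_self
    rw [zpow_natCast]
    nlinarith
  · rw [one_mul]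
    refine rpow_mul_exp_neg_half_le_of_le_inv_two_pow hm.le (by positivity) ?_
    rw [zpow_neg, zpow_add_one₀ two_ne_zero, zpow_natCast, mul_inv]
    nlinarith [inv_pos.2 (pow_pos (zero_lt_two' ℝ) k)]

theorem summable_and_tsum_rpow_mul_exp_neg_half_le {m a : ℝ} (hm : 0 < m) (ha : 0 < a) :
    Summable (fun j : ℤ => (a * 2 ^ j) ^ m * exp (-(a * 2 ^ j / 2))) ∧
      ∑' j : ℤ, (a * 2 ^ j) ^ m * exp (-(a * 2 ^ j / 2)) ≤
        1 / (1 - 2 ^ (-m)) + (8 * m) ^ m / (1 - exp (-1 / 8)) := by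
  obtain ⟨n, hn₁, hn₂⟩ := exists_mem_Ico_zpow ha one_lt_two
  have h2n : (0 : ℝ) < 2 ^ n := zpow_pos two_pos n
  have hc : a / 2 ^ n ∈ Set.Ico 1 2 := by
    rw [zpow_add_one₀ two_ne_zero] at hn₂
    exact ⟨(one_le_div h2n).2 hn₁, (div_lt_iff₀ h2n).2 (by linarith)⟩
  have hshift : (fun j : ℤ => (a * 2 ^ j) ^ m * exp (-(a * 2 ^ j / 2))) ∘ Equiv.subRight n =
      fun j : ℤ => (a / 2 ^ n * 2 ^ j) ^ m * exp (-(a / 2 ^ n * 2 ^ j / 2)) := by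
    funext j
    simp only [Function.comp_apply, Equiv.subRight_apply, zpow_sub₀ (two_ne_zero' ℝ)]
    field_simp
  obtain ⟨hsum, hle⟩ := summable_and_tsum_rpow_mul_exp_neg_half_le_of_mem_Ico hm hc
  rw [← hshift] at hsum hle
  exact ⟨(Equiv.subRight n).summable_iff.1 hsum, by rwa [← (Equiv.subRight n).tsum_eq]⟩

theorem stmt_2 (m t : ℝ) (hm : 0 < m) (ht : 0 < t) :
    Summable (fun j : ℤ =>
      (Real.sqrt t * (2 : ℝ) ^ (j : ℝ)) ^ m *
        Real.exp (-(1 / 2) * Real.sqrt t * (2 : ℝ) ^ (j : ℝ))) ∧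
    (∑' j : ℤ, (Real.sqrt t * (2 : ℝ) ^ (j : ℝ)) ^ m *
        Real.exp (-(1 / 2) * Real.sqrt t * (2 : ℝ) ^ (j : ℝ))) ≤
      1 / (1 - 2 ^ (-m)) + (8 * m) ^ m / (1 - Real.exp (-1 / 8)) := by
  have hsummand : (fun j : ℤ => (Real.sqrt t * (2 : ℝ) ^ (j : ℝ)) ^ m *
      Real.exp (-(1 / 2) * Real.sqrt t * (2 : ℝ) ^ (j : ℝ))) =
      fun j : ℤ => (Real.sqrt t * 2 ^ j) ^ m * exp (-(Real.sqrt t * 2 ^ j / 2)) := by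
    funext j
    rw [rpow_intCast]
    ring_nf
  rw [hsummand]
  exact summable_and_tsum_rpow_mul_exp_neg_half_le hm (sqrt_pos.2 ht)
end

section
/- Let 1 ≤ p, r, r₁, r₂ ≤ ∞, σ₁ ≠ σ₂ real numbers, θ ∈ (0,1), and 1/r = θ/r₁ + (1-θ)/r₂. Then for any tempered distribution f modulo polynomials, ‖f‖_{Ḃ^{θσ₁+(1-θ)σ₂}_{p,r}} ≤ C ‖f‖_{Ḃ^{σ₁}_{p,r₁}}^θ ‖f‖_{Ḃ^{σ₂}_{p,r₂}}^{1-θ}. -/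
open MeasureTheory
open scoped ENNReal

/-!
Writing `a_j = ‖Δ̇_j f‖_{L^p}`, the interpolated weight factors as
`2^{j(θσ₁+(1-θ)σ₂)} a_j = (2^{jσ₁} a_j)^θ (2^{jσ₂} a_j)^{1-θ}`, and Hölder's inequality on `ℓ^r`
with exponents `r₁/θ` and `r₂/(1-θ)` bounds the `ℓ^r` norm of this product by
`‖(2^{jσ₁} a_j)‖_{ℓ^{r₁}}^θ ‖(2^{jσ₂} a_j)‖_{ℓ^{r₂}}^{1-θ}`; so the inequality holds with `C = 1`.
-/

namespace MeasureTheory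

variable {α E F : Type*} {m : MeasurableSpace α} {μ : Measure α}
  [NormedAddCommGroup E] [NormedAddCommGroup F]

theorem eLpNorm_norm_rpow_div_ofReal (f : α → E) (r : ℝ≥0∞) {θ : ℝ} (hθ : 0 < θ) :
    eLpNorm (fun x => ‖f x‖ ^ θ) (r / ENNReal.ofReal θ) μ = eLpNorm f r μ ^ θ := by
  rw [eLpNorm_norm_rpow f hθ,
    ENNReal.div_mul_cancel (ENNReal.ofReal_pos.2 hθ).ne' ENNReal.ofReal_ne_top]

theorem eLpNorm_norm_rpow_mul_norm_rpow_le {f : α → E} {g : α → F}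
    (hf : AEStronglyMeasurable f μ) (hg : AEStronglyMeasurable g μ) {r r₁ r₂ : ℝ≥0∞}
    {θ η : ℝ} (hθ : 0 < θ) (hη : 0 < η)
    (hr : 1 / r = ENNReal.ofReal θ / r₁ + ENNReal.ofReal η / r₂) :
    eLpNorm (fun x => ‖f x‖ ^ θ * ‖g x‖ ^ η) r μ ≤ eLpNorm f r₁ μ ^ θ * eLpNorm g r₂ μ ^ η := by
  have hθ' : ENNReal.ofReal θ ≠ 0 := (ENNReal.ofReal_pos.2 hθ).ne'
  have hη' : ENNReal.ofReal η ≠ 0 := (ENNReal.ofReal_pos.2 hη).ne'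
  have : ENNReal.HolderTriple (r₁ / ENNReal.ofReal θ) (r₂ / ENNReal.ofReal η) r := by
    constructor
    rw [ENNReal.inv_div (.inl ENNReal.ofReal_ne_top) (.inl hθ'),
      ENNReal.inv_div (.inl ENNReal.ofReal_ne_top) (.inl hη'), ← one_div, hr]
  rw [← eLpNorm_norm_rpow_div_ofReal f r₁ hθ, ← eLpNorm_norm_rpow_div_ofReal g r₂ hη]
  simpa using eLpNorm_le_eLpNorm_mul_eLpNorm'_of_norm
    (hf.norm.aemeasurable.pow_const θ).aestronglyMeasurable
    (hg.norm.aemeasurable.pow_const η).aestronglyMeasurable (· * ·) 1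
    (.of_forall fun x => by simp)

end MeasureTheory

theorem Real.rpow_convexComb_mul_eq {a x : ℝ} (ha : 0 < a) (hx : 0 ≤ x) (s t θ : ℝ) :
    a ^ (θ * s + (1 - θ) * t) * x = ‖a ^ s * x‖ ^ θ * ‖a ^ t * x‖ ^ (1 - θ) := by
  rw [Real.norm_of_nonneg (by positivity), Real.norm_of_nonneg (by positivity),
    Real.mul_rpow (by positivity) hx, Real.mul_rpow (by positivity) hx,
    ← Real.rpow_mul ha.le, ← Real.rpow_mul ha.le, mul_mul_mul_comm, ← Real.rpow_add ha,
    ← Real.rpow_add' hx (by norm_num), add_sub_cancel, Real.rpow_one, mul_comm s, mul_comm t]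

theorem stmt_16_general (d : ℕ) (p r r₁ r₂ : ℝ≥0∞)
    (σ₁ σ₂ θ : ℝ)
    (hθ₀ : 0 < θ) (hθ₁ : θ < 1)
    (hhol : 1 / r = ENNReal.ofReal θ / r₁ + ENNReal.ofReal (1 - θ) / r₂) :
    ∃ C : ℝ, 0 < C ∧
      ∀ D : ℤ → EuclideanSpace ℝ (Fin d) → ℂ,
        eLpNorm (fun j : ℤ =>
            (2 : ℝ) ^ ((j : ℝ) * (θ * σ₁ + (1 - θ) * σ₂)) *
              (eLpNorm (D j) p volume).toReal) r .count ≤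
          ENNReal.ofReal C *
            (eLpNorm (fun j : ℤ =>
              (2 : ℝ) ^ ((j : ℝ) * σ₁) * (eLpNorm (D j) p volume).toReal) r₁ .count) ^ θ *
            (eLpNorm (fun j : ℤ =>
              (2 : ℝ) ^ ((j : ℝ) * σ₂) * (eLpNorm (D j) p volume).toReal) r₂ .count) ^
              (1 - θ) := by
  refine ⟨1, one_pos, fun D => ?_⟩
  have hfactor : ∀ j : ℤ,
      (2 : ℝ) ^ ((j : ℝ) * (θ * σ₁ + (1 - θ) * σ₂)) * (eLpNorm (D j) p volume).toReal =
        ‖(2 : ℝ) ^ ((j : ℝ) * σ₁) * (eLpNorm (D j) p volume).toReal‖ ^ θ *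
          ‖(2 : ℝ) ^ ((j : ℝ) * σ₂) * (eLpNorm (D j) p volume).toReal‖ ^ (1 - θ) := fun j => by
    rw [← Real.rpow_convexComb_mul_eq two_pos ENNReal.toReal_nonneg]
    congr 2; ring
  simp_rw [hfactor, ENNReal.ofReal_one, one_mul]
  exact eLpNorm_norm_rpow_mul_norm_rpow_le (measurable_of_countable _).aestronglyMeasurable
    (measurable_of_countable _).aestronglyMeasurable hθ₀ (sub_pos.2 hθ₁) hhol

/-- Interpolation inequality for homogeneous Besov norms, expressed through the
Littlewood–Paley blocks `D j = Δ̇_j f`: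
`‖f‖_{Ḃ^{θσ₁+(1-θ)σ₂}_{p,r}} ≤ C ‖f‖_{Ḃ^{σ₁}_{p,r₁}}^θ ‖f‖_{Ḃ^{σ₂}_{p,r₂}}^{1-θ}`. -/
theorem stmt_16 (d : ℕ) (p r r₁ r₂ : ℝ≥0∞) (hp : 1 ≤ p) (hr : 1 ≤ r)
    (hr₁ : 1 ≤ r₁) (hr₂ : 1 ≤ r₂) (σ₁ σ₂ θ : ℝ) (hσ : σ₁ ≠ σ₂)
    (hθ₀ : 0 < θ) (hθ₁ : θ < 1)
    (hhol : 1 / r = ENNReal.ofReal θ / r₁ + ENNReal.ofReal (1 - θ) / r₂) :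
    ∃ C : ℝ, 0 < C ∧
      ∀ D : ℤ → EuclideanSpace ℝ (Fin d) → ℂ,
        eLpNorm (fun j : ℤ =>
            (2 : ℝ) ^ ((j : ℝ) * (θ * σ₁ + (1 - θ) * σ₂)) *
              (eLpNorm (D j) p volume).toReal) r .count ≤
          ENNReal.ofReal C *
            (eLpNorm (fun j : ℤ =>
              (2 : ℝ) ^ ((j : ℝ) * σ₁) * (eLpNorm (D j) p volume).toReal) r₁ .count) ^ θ *
            (eLpNorm (fun j : ℤ =>
              (2 : ℝ) ^ ((j : ℝ) * σ₂) * (eLpNorm (D j) p volume).toReal) r₂ .count) ^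
              (1 - θ) :=
  stmt_16_general d p r r₁ r₂ σ₁ σ₂ θ hθ₀ hθ₁ hhol
end

section
/- Let γ > 0 and c, c₁, c₂ > 0 satisfy c|ξ+η| - c₁|ξ| - c₂|η| ≤ -|η| for all (ξ,η) in the support region {|ξ| ∼ λ₁, |η| ∼ λ₂} with λ₁ ≤ kλ₂. Then the symbol m(ξ,η) = e^{γ(c|ξ+η| - c₁|ξ| - c₂|η|)} φ(ξ/λ₁) φ(η/λ₂), with φ smooth and supported in an annulus, satisfies the first-order Coifman–Meyer bounds |∂_{ξ_i} m(ξ,η)| ≤ C/|ξ| and |∂_{η_i} m(ξ,η)| ≤ C/|η| for all i, with C independent of γ, λ₁, λ₂. -/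
open Real Filter Asymptotics

section
variable {E : Type*} [NormedAddCommGroup E] [NormedSpace ℝ E]

lemma hasFDerivAt_mul_of_lipschitz {q w : E → ℝ} {x : E} {K : ℝ} {Dw : E →L[ℝ] ℝ}
    (hq : ∀ᶠ y in nhds x, |q y - q x| ≤ K * ‖y - x‖)
    (hw : HasFDerivAt w Dw x) (hw0 : w x = 0) :
    HasFDerivAt (fun y => q y * w y) (q x • Dw) x := by
  rw [hasFDerivAt_iff_isLittleO_nhds_zero]
  have heq : (fun h : E => q (x + h) * w (x + h) - q x * w x - (q x • Dw) h)
      = (fun h : E => (q (x + h) - q x) * w (x + h))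
        + fun h : E => q x * (w (x + h) - w x - Dw h) := by
    funext h
    simp only [Pi.add_apply, ContinuousLinearMap.smul_apply, smul_eq_mul]
    ring
  rw [heq]
  have h2 : (fun h : E => q x * (w (x + h) - w x - Dw h)) =o[nhds (0 : E)] fun h => h :=
    (hasFDerivAt_iff_isLittleO_nhds_zero.1 hw).const_mul_left (q x)
  refine IsLittleO.add ?_ h2
  have hmap : Tendsto (fun h : E => x + h) (nhds 0) (nhds x) := by
    simpa using (continuous_add_left x).tendsto (0 : E)
  have hA : (fun h : E => q (x + h) - q x) =O[nhds (0 : E)] fun h : E => ‖h‖ := by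
    rw [isBigO_iff]
    refine ⟨K, ?_⟩
    filter_upwards [hmap.eventually hq] with h hh
    simpa [Real.norm_eq_abs, abs_norm, add_sub_cancel_left] using hh
  have hB : (fun h : E => w (x + h)) =o[nhds (0 : E)] fun _ : E => (1 : ℝ) := by
    rw [isLittleO_one_iff]
    simpa [hw0, Function.comp_def] using hw.continuousAt.tendsto.comp hmap
  have h4 := hA.mul_isLittleO hB
  have h3 : (fun h : E => ‖h‖ * 1) = fun h : E => ‖h‖ := by funext h; ring
  rw [h3] at h4
  exact h4.trans_isBigO (isBigO_refl _ _).norm_left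

end

set_option maxHeartbeats 8000000 in
/-- Master bound for one partial derivative of the localized Gevrey symbol. -/
lemma master_bound {d : ℕ} [Nontrivial (EuclideanSpace ℝ (Fin d))]
    (φ : EuclideanSpace ℝ (Fin d) → ℝ) (hφ : ContDiff ℝ (⊤ : ℕ∞) φ)
    (rA RA M M' : ℝ) (hrA : 0 < rA) (hAR : rA < RA)
    (hφsupp : tsupport φ ⊆ {x | rA ≤ ‖x‖ ∧ ‖x‖ ≤ RA})
    (hM : ∀ y, |φ y| ≤ M) (hM' : ∀ y, ‖fderiv ℝ φ y‖ ≤ M')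
    (γ c b s A δ lam t : ℝ) (v x : EuclideanSpace ℝ (Fin d))
    (hγ : 0 < γ) (hc : 0 < c) (hb : 0 < b) (hlam : 0 < lam) (hA : 0 ≤ A)
    (hδx : lam⁻¹ • x ∈ tsupport φ → t ≠ 0 → ‖x‖ ≤ A * δ)
    (hexp : lam⁻¹ • x ∈ tsupport φ → t ≠ 0 →
      c * ‖x + v‖ - b * ‖x‖ + s ≤ -δ) :
    ‖fderiv ℝ (fun x' => Real.exp (γ * (c * ‖x' + v‖ - b * ‖x'‖ + s)) *
        φ (lam⁻¹ • x') * t) x‖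
      ≤ (((c + b) * M * A + M' * RA) * |t|) / ‖x‖ := by
  have hM0 : 0 ≤ M := (abs_nonneg _).trans (hM 0)
  have hM'0 : 0 ≤ M' := (norm_nonneg _).trans (hM' 0)
  have hRA : 0 < RA := hrA.trans hAR
  set F : EuclideanSpace ℝ (Fin d) → ℝ :=
    fun x' => Real.exp (γ * (c * ‖x' + v‖ - b * ‖x'‖ + s)) * φ (lam⁻¹ • x') * t with hFdef
  have hnum : 0 ≤ ((c + b) * M * A + M' * RA) * |t| := by positivity
  have hRHS : 0 ≤ (((c + b) * M * A + M' * RA) * |t|) / ‖x‖ :=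
    div_nonneg hnum (norm_nonneg x)
  by_cases hsup : lam⁻¹ • x ∈ tsupport φ
  swap
  · have hev : F =ᶠ[nhds x] fun _ => (0 : ℝ) := by
      have hopen : IsOpen ((fun x' : EuclideanSpace ℝ (Fin d) => lam⁻¹ • x') ⁻¹'
          (tsupport φ)ᶜ) :=
        (isClosed_tsupport φ).isOpen_compl.preimage (continuous_const_smul _)
      filter_upwards [hopen.mem_nhds (by simpa using hsup)] with y hy
      simp [F, image_eq_zero_of_notMem_tsupport hy]
    have h0 : fderiv ℝ F x = 0 := by
      rw [hev.fderiv_eq]; exact fderiv_const_apply 0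
    rw [h0]; simpa using hRHS
  by_cases ht : t = 0
  · have h0 : fderiv ℝ F x = 0 := by
      have hz : F = fun _ => (0 : ℝ) := by funext y; simp [F, ht]
      rw [hz]; exact fderiv_const_apply 0
    rw [h0]; simpa using hRHS
  -- main case
  have hann := hφsupp hsup
  have hsm : ‖lam⁻¹ • x‖ = lam⁻¹ * ‖x‖ := by
    rw [norm_smul, Real.norm_eq_abs, abs_of_pos (inv_pos.2 hlam)]
  have hxlo : rA * lam ≤ ‖x‖ := by
    have h1 := hann.1; rw [hsm] at h1
    have h2 : lam * rA ≤ lam * (lam⁻¹ * ‖x‖) := mul_le_mul_of_nonneg_left h1 hlam.le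
    have h3 : lam * (lam⁻¹ * ‖x‖) = ‖x‖ := by field_simp
    linarith
  have hxhi : ‖x‖ ≤ RA * lam := by
    have h1 := hann.2; rw [hsm] at h1
    have h2 : lam * (lam⁻¹ * ‖x‖) ≤ lam * RA := mul_le_mul_of_nonneg_left h1 hlam.le
    have h3 : lam * (lam⁻¹ * ‖x‖) = ‖x‖ := by field_simp
    linarith
  have hxpos : 0 < ‖x‖ := lt_of_lt_of_le (by positivity) hxlo
  have hx0 : x ≠ 0 := by simpa [norm_pos_iff] using hxpos
  have hxAδ : ‖x‖ ≤ A * δ := hδx hsup ht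
  have hδpos : 0 < δ := by
    by_contra hcon
    push_neg at hcon
    nlinarith
  have hexp2 : c * ‖x + v‖ - b * ‖x‖ + s ≤ -δ := hexp hsup ht
  set Eval : ℝ := Real.exp (γ * (c * ‖x + v‖ - b * ‖x‖ + s)) with hEvaldef
  have hEval1 : Eval ≤ Real.exp (-(γ * δ)) := by
    apply Real.exp_le_exp.2; nlinarith
  have hEle1 : Real.exp (-(γ * δ)) ≤ 1 := by
    rw [Real.exp_le_one_iff]; nlinarith
  have hEa : Eval ≤ 1 := hEval1.trans hEle1
  have hEpos : 0 < Eval := Real.exp_pos _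
  have hγE : γ * Real.exp (-(γ * δ)) ≤ 1 / δ := by
    have h1 : γ * δ ≤ Real.exp (γ * δ) :=
      le_trans (le_add_of_nonneg_right zero_le_one) (Real.add_one_le_exp _)
    rw [Real.exp_neg, ← div_eq_mul_inv, div_le_div_iff₀ (Real.exp_pos _) hδpos]
    linarith
  have hγEval : γ * Eval ≤ 1 / δ :=
    le_trans (mul_le_mul_of_nonneg_left hEval1 hγ.le) hγE
  -- basic derivative facts
  have hN2 : HasFDerivAt (fun y : EuclideanSpace ℝ (Fin d) => ‖y‖)
      (fderiv ℝ (fun y : EuclideanSpace ℝ (Fin d) => ‖y‖) x) x :=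
    ((contDiffAt_norm ℝ hx0 (n := 1)).differentiableAt one_ne_zero).hasFDerivAt
  set N₂ := fderiv ℝ (fun y : EuclideanSpace ℝ (Fin d) => ‖y‖) x with hN2def
  have hN2n : ‖N₂‖ ≤ 1 := by
    simpa using norm_fderiv_le_of_lipschitz ℝ
      (lipschitzWith_one_norm (E := EuclideanSpace ℝ (Fin d))) (x₀ := x)
  have hin : HasFDerivAt (fun y : EuclideanSpace ℝ (Fin d) => lam⁻¹ • y)
      (lam⁻¹ • ContinuousLinearMap.id ℝ (EuclideanSpace ℝ (Fin d))) x :=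
    (hasFDerivAt_id x).const_smul lam⁻¹
  set P : EuclideanSpace ℝ (Fin d) →L[ℝ] ℝ :=
    (fderiv ℝ φ (lam⁻¹ • x)).comp
      (lam⁻¹ • ContinuousLinearMap.id ℝ (EuclideanSpace ℝ (Fin d))) with hPdef
  have hphi : HasFDerivAt (fun y : EuclideanSpace ℝ (Fin d) => φ (lam⁻¹ • y)) P x := by
    have h := ((hφ.differentiable (by simp) (lam⁻¹ • x)).hasFDerivAt).comp x hin
    exact h
  have hPn : ‖P‖ ≤ M' * lam⁻¹ := by
    have hPeq : P = lam⁻¹ • fderiv ℝ φ (lam⁻¹ • x) := by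
      ext y; simp [hPdef]
    rw [hPeq]
    have h := ContinuousLinearMap.opNorm_smul_le (lam⁻¹)
      (fderiv ℝ φ (lam⁻¹ • x))
    refine h.trans ?_
    rw [Real.norm_eq_abs, abs_of_pos (inv_pos.2 hlam)]
    calc lam⁻¹ * ‖fderiv ℝ φ (lam⁻¹ • x)‖ ≤ lam⁻¹ * M' :=
          mul_le_mul_of_nonneg_left (hM' _) (inv_pos.2 hlam).le
      _ = M' * lam⁻¹ := mul_comm _ _
  have hlaminv : lam⁻¹ ≤ RA / ‖x‖ := by
    rw [le_div_iff₀ hxpos]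
    have h1 : lam⁻¹ * ‖x‖ ≤ lam⁻¹ * (RA * lam) :=
      mul_le_mul_of_nonneg_left hxhi (inv_pos.2 hlam).le
    have h2 : lam⁻¹ * (RA * lam) = RA := by field_simp
    linarith
  have h1δ : 1 / δ ≤ A / ‖x‖ := by
    rw [div_le_div_iff₀ hδpos hxpos]
    linarith
  by_cases hxv : x + v = 0
  · -- the `‖·+v‖` factor is not differentiable at `x`; split on φ(lam⁻¹•x)
    -- first, derivative data of `w`
    set w : EuclideanSpace ℝ (Fin d) → ℝ :=
      fun y => Real.exp (γ * (s - b * ‖y‖)) * φ (lam⁻¹ • y) * t with hwdef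
    have hs2 : HasFDerivAt (fun y : EuclideanSpace ℝ (Fin d) => s - b * ‖y‖)
        (-(b • N₂)) x := (hN2.const_mul b).const_sub s
    have hw1 : HasFDerivAt (fun y : EuclideanSpace ℝ (Fin d) => Real.exp (γ * (s - b * ‖y‖)))
        (Real.exp (γ * (s - b * ‖x‖)) • (γ • -(b • N₂))) x := (hs2.const_mul γ).exp
    have hw : HasFDerivAt w
        (t • (Real.exp (γ * (s - b * ‖x‖)) • P +
          φ (lam⁻¹ • x) • (Real.exp (γ * (s - b * ‖x‖)) • (γ • -(b • N₂))))) x :=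
      (hw1.mul hphi).mul_const t
    set q : EuclideanSpace ℝ (Fin d) → ℝ :=
      fun y => Real.exp (γ * (c * ‖y + v‖)) with hqdef
    have hFqw : F = fun y => q y * w y := by
      funext y
      simp only [F, q, w]
      rw [show γ * (c * ‖y + v‖ - b * ‖y‖ + s)
          = γ * (c * ‖y + v‖) + γ * (s - b * ‖y‖) by ring, Real.exp_add]
      ring
    have hqx : q x = 1 := by simp [q, hxv]
    have hE2 : Real.exp (γ * (s - b * ‖x‖)) = Eval := by
      have harg : γ * (s - b * ‖x‖) = γ * (c * ‖x + v‖ - b * ‖x‖ + s) := by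
        rw [hxv, norm_zero]; ring
      rw [hEvaldef, harg]
    by_cases hphiz : φ (lam⁻¹ • x) = 0
    · -- F differentiable with small derivative via the Lipschitz product rule
      have hqlip : ∀ᶠ y in nhds x, |q y - q x| ≤ (γ * c * Real.exp (γ * c)) * ‖y - x‖ := by
        filter_upwards [Metric.ball_mem_nhds x one_pos] with y hy
        rw [Metric.mem_ball, dist_eq_norm] at hy
        have hyv : y + v = y - x := by
          rw [show y - x = y + v - (x + v) by abel, hxv, sub_zero]
        rw [hqx, hqdef]
        simp only [hyv]
        set r := ‖y - x‖ with hr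
        have hr0 : 0 ≤ r := norm_nonneg _
        have hrl : r ≤ 1 := hy.le
        set u := γ * (c * r) with hu
        have hu0 : 0 ≤ u := by positivity
        have huγc : u ≤ γ * c := by
          have hh := mul_le_mul_of_nonneg_left hrl (mul_pos hγ hc).le
          rw [hu]; nlinarith
        have h1 : |Real.exp u - 1| = Real.exp u - 1 := by
          rw [abs_of_nonneg]
          have := Real.one_le_exp hu0
          linarith
        rw [h1]
        have h2 : Real.exp u - 1 ≤ u * Real.exp u := by
          have h := Real.add_one_le_exp (-u)
          rw [Real.exp_neg] at h
          have hinv : (Real.exp u)⁻¹ * Real.exp u = 1 :=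
            inv_mul_cancel₀ (Real.exp_ne_zero u)
          nlinarith [mul_le_mul_of_nonneg_right h (Real.exp_pos u).le]
        have h3 : Real.exp u ≤ Real.exp (γ * c) := Real.exp_le_exp.2 huγc
        have h4 : u * Real.exp u ≤ u * Real.exp (γ * c) :=
          mul_le_mul_of_nonneg_left h3 hu0
        have h5 : u * Real.exp (γ * c) = γ * c * Real.exp (γ * c) * r := by
          rw [hu]; ring
        linarith
      have hw0 : w x = 0 := by simp [w, hphiz]
      have hFd : HasFDerivAt F (q x •
          (t • (Real.exp (γ * (s - b * ‖x‖)) • P +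
            φ (lam⁻¹ • x) • (Real.exp (γ * (s - b * ‖x‖)) • (γ • -(b • N₂)))))) x := by
        rw [hFqw]
        exact hasFDerivAt_mul_of_lipschitz hqlip hw hw0
      rw [hFd.fderiv, hqx, one_smul, hphiz, zero_smul, add_zero, hE2]
      have hnn : ‖t • (Eval • P)‖ ≤ |t| * (Eval * (M' * lam⁻¹)) := by
        refine le_trans (ContinuousLinearMap.opNorm_smul_le _ _) ?_
        rw [Real.norm_eq_abs]
        refine mul_le_mul_of_nonneg_left ?_ (abs_nonneg t)
        refine le_trans (ContinuousLinearMap.opNorm_smul_le _ _) ?_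
        rw [Real.norm_eq_abs, abs_of_pos hEpos]
        exact mul_le_mul_of_nonneg_left hPn hEpos.le
      refine hnn.trans ?_
      have key : Eval * (M' * lam⁻¹) ≤ ((c + b) * M * A + M' * RA) / ‖x‖ := by
        have h1 : Eval * (M' * lam⁻¹) ≤ 1 * (M' * lam⁻¹) :=
          mul_le_mul_of_nonneg_right hEa (by positivity)
        have h2 : M' * lam⁻¹ ≤ M' * (RA / ‖x‖) := mul_le_mul_of_nonneg_left hlaminv hM'0
        have h3 : M' * (RA / ‖x‖) ≤ ((c + b) * M * A + M' * RA) / ‖x‖ := by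
          rw [← mul_div_assoc, div_le_div_iff₀ hxpos hxpos]
          have h4 : 0 ≤ (c + b) * M * A := by positivity
          nlinarith
        linarith
      calc |t| * (Eval * (M' * lam⁻¹)) ≤ |t| * (((c + b) * M * A + M' * RA) / ‖x‖) :=
            mul_le_mul_of_nonneg_left key (abs_nonneg t)
        _ = (((c + b) * M * A + M' * RA) * |t|) / ‖x‖ := by ring
    · -- F is not differentiable at x
      have hnd : ¬ DifferentiableAt ℝ F x := by
        intro hdF
        have hwdiff : DifferentiableAt ℝ w x := hw.differentiableAt
        have hwx : w x ≠ 0 := by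
          simp only [w]
          exact mul_ne_zero (mul_ne_zero (Real.exp_ne_zero _) hphiz) ht
        have hne : ∀ᶠ y in nhds x, w y ≠ 0 := hwdiff.continuousAt.eventually_ne hwx
        have hev : (fun y => F y * (w y)⁻¹) =ᶠ[nhds x] q := by
          filter_upwards [hne] with y hy
          rw [hFqw, mul_assoc, mul_inv_cancel₀ hy, mul_one]
        have hqdiff : DifferentiableAt ℝ q x :=
          (hev.differentiableAt_iff).1 (hdF.mul (hwdiff.inv hwx))
        have hlog : DifferentiableAt ℝ (fun y => Real.log (q y)) x :=
          hqdiff.log (by rw [hqx]; norm_num)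
        have heq : (fun y : EuclideanSpace ℝ (Fin d) => (γ * c)⁻¹ * Real.log (q y))
            = fun y => ‖y + v‖ := by
          funext y
          rw [hqdef]
          simp only []
          rw [Real.log_exp]
          field_simp
        have hnrm : DifferentiableAt ℝ
            (fun y : EuclideanSpace ℝ (Fin d) => ‖y + v‖) x := by
          have h := hlog.const_mul ((γ * c)⁻¹)
          rwa [heq] at h
        have hzsub : (0 : EuclideanSpace ℝ (Fin d)) - v = x := by
          have : x = -v := eq_neg_of_add_eq_zero_left hxv
          rw [this, zero_sub]
        have hnrm' : DifferentiableAt ℝ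
            (fun y : EuclideanSpace ℝ (Fin d) => ‖y + v‖)
            ((fun z : EuclideanSpace ℝ (Fin d) => z - v) 0) := by
          simpa [hzsub] using hnrm
        have hsub : DifferentiableAt ℝ
            (fun z : EuclideanSpace ℝ (Fin d) => z - v) 0 :=
          differentiableAt_id.sub_const v
        have hcomp := hnrm'.comp (0 : EuclideanSpace ℝ (Fin d)) hsub
        have hnorm0 : DifferentiableAt ℝ
            (fun z : EuclideanSpace ℝ (Fin d) => ‖z‖) 0 := by
          have hfun : ((fun y : EuclideanSpace ℝ (Fin d) => ‖y + v‖) ∘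
              fun z : EuclideanSpace ℝ (Fin d) => z - v)
              = fun z : EuclideanSpace ℝ (Fin d) => ‖z‖ := by
            funext z; simp [Function.comp]
          rwa [hfun] at hcomp
        exact not_differentiableAt_norm_zero (EuclideanSpace ℝ (Fin d)) hnorm0
      rw [fderiv_zero_of_not_differentiableAt hnd]
      simpa using hRHS
  · -- fully differentiable case
    have hadd : HasFDerivAt (fun y : EuclideanSpace ℝ (Fin d) => y + v)
        (ContinuousLinearMap.id ℝ (EuclideanSpace ℝ (Fin d))) x :=
      (hasFDerivAt_id x).add_const v
    set N₁ := fderiv ℝ (fun y : EuclideanSpace ℝ (Fin d) => ‖y‖) (x + v) with hN1def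
    have hN1 : HasFDerivAt (fun y : EuclideanSpace ℝ (Fin d) => ‖y + v‖) N₁ x := by
      have hdn : HasFDerivAt (fun y : EuclideanSpace ℝ (Fin d) => ‖y‖) N₁ (x + v) :=
        ((contDiffAt_norm ℝ hxv (n := 1)).differentiableAt one_ne_zero).hasFDerivAt
      have h := hdn.comp x hadd
      exact h
    have hN1n : ‖N₁‖ ≤ 1 := by
      simpa using norm_fderiv_le_of_lipschitz ℝ
        (lipschitzWith_one_norm (E := EuclideanSpace ℝ (Fin d))) (x₀ := x + v)
    have hlin : HasFDerivAt
        (fun y : EuclideanSpace ℝ (Fin d) => c * ‖y + v‖ - b * ‖y‖ + s)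
        (c • N₁ - b • N₂) x := ((hN1.const_mul c).sub (hN2.const_mul b)).add_const s
    have hee : HasFDerivAt
        (fun y : EuclideanSpace ℝ (Fin d) => γ * (c * ‖y + v‖ - b * ‖y‖ + s))
        (γ • (c • N₁ - b • N₂)) x := hlin.const_mul γ
    have hexp' : HasFDerivAt
        (fun y : EuclideanSpace ℝ (Fin d) =>
          Real.exp (γ * (c * ‖y + v‖ - b * ‖y‖ + s)))
        (Eval • (γ • (c • N₁ - b • N₂))) x := hee.exp
    have hF : HasFDerivAt F
        (t • (Eval • P + φ (lam⁻¹ • x) • (Eval • (γ • (c • N₁ - b • N₂))))) x :=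
      (hexp'.mul hphi).mul_const t
    rw [hF.fderiv]
    have hLe : ‖γ • (c • N₁ - b • N₂)‖ ≤ γ * (c + b) := by
      refine le_trans (ContinuousLinearMap.opNorm_smul_le _ _) ?_
      rw [Real.norm_eq_abs, abs_of_pos hγ]
      refine mul_le_mul_of_nonneg_left ?_ hγ.le
      have h1 : ‖c • N₁‖ ≤ c * 1 := by
        refine le_trans (ContinuousLinearMap.opNorm_smul_le _ _) ?_
        rw [Real.norm_eq_abs, abs_of_pos hc]
        exact mul_le_mul_of_nonneg_left hN1n hc.le
      have h2 : ‖b • N₂‖ ≤ b * 1 := by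
        refine le_trans (ContinuousLinearMap.opNorm_smul_le _ _) ?_
        rw [Real.norm_eq_abs, abs_of_pos hb]
        exact mul_le_mul_of_nonneg_left hN2n hb.le
      calc ‖c • N₁ - b • N₂‖ ≤ ‖c • N₁‖ + ‖b • N₂‖ := norm_sub_le _ _
        _ ≤ c * 1 + b * 1 := add_le_add h1 h2
        _ = c + b := by ring
    have hstep1 : ‖t • (Eval • P + φ (lam⁻¹ • x) • (Eval • (γ • (c • N₁ - b • N₂))))‖
        ≤ |t| * (Eval * (M' * lam⁻¹) + M * (Eval * (γ * (c + b)))) := by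
      refine le_trans (ContinuousLinearMap.opNorm_smul_le _ _) ?_
      rw [Real.norm_eq_abs]
      refine mul_le_mul_of_nonneg_left ?_ (abs_nonneg t)
      have hp1 : ‖Eval • P‖ ≤ Eval * (M' * lam⁻¹) := by
        refine le_trans (ContinuousLinearMap.opNorm_smul_le _ _) ?_
        rw [Real.norm_eq_abs, abs_of_pos hEpos]
        exact mul_le_mul_of_nonneg_left hPn hEpos.le
      have hp2 : ‖φ (lam⁻¹ • x) • (Eval • (γ • (c • N₁ - b • N₂)))‖
          ≤ M * (Eval * (γ * (c + b))) := by
        refine le_trans (ContinuousLinearMap.opNorm_smul_le _ _) ?_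
        rw [Real.norm_eq_abs]
        have hinner : ‖Eval • (γ • (c • N₁ - b • N₂))‖ ≤ Eval * (γ * (c + b)) := by
          refine le_trans (ContinuousLinearMap.opNorm_smul_le _ _) ?_
          rw [Real.norm_eq_abs, abs_of_pos hEpos]
          exact mul_le_mul_of_nonneg_left hLe hEpos.le
        exact mul_le_mul (hM _) hinner (norm_nonneg _) hM0
      calc ‖Eval • P + φ (lam⁻¹ • x) • (Eval • (γ • (c • N₁ - b • N₂)))‖
          ≤ ‖Eval • P‖ + ‖φ (lam⁻¹ • x) • (Eval • (γ • (c • N₁ - b • N₂)))‖ :=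
            norm_add_le _ _
        _ ≤ Eval * (M' * lam⁻¹) + M * (Eval * (γ * (c + b))) := add_le_add hp1 hp2
    refine hstep1.trans ?_
    have key : Eval * (M' * lam⁻¹) + M * (Eval * (γ * (c + b)))
        ≤ ((c + b) * M * A + M' * RA) / ‖x‖ := by
      have h1 : Eval * (M' * lam⁻¹) ≤ M' * (RA / ‖x‖) := by
        have ha : Eval * (M' * lam⁻¹) ≤ 1 * (M' * lam⁻¹) :=
          mul_le_mul_of_nonneg_right hEa (by positivity)
        have hb2 : M' * lam⁻¹ ≤ M' * (RA / ‖x‖) := mul_le_mul_of_nonneg_left hlaminv hM'0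
        linarith
      have h2 : M * (Eval * (γ * (c + b))) ≤ M * ((A / ‖x‖) * (c + b)) := by
        apply mul_le_mul_of_nonneg_left _ hM0
        have ha : Eval * (γ * (c + b)) = (γ * Eval) * (c + b) := by ring
        rw [ha]
        apply mul_le_mul_of_nonneg_right _ (by positivity)
        exact hγEval.trans h1δ
      have h3 : M' * (RA / ‖x‖) + M * ((A / ‖x‖) * (c + b))
          = ((c + b) * M * A + M' * RA) / ‖x‖ := by
        field_simp
        ring
      linarith
    calc |t| * (Eval * (M' * lam⁻¹) + M * (Eval * (γ * (c + b))))
        ≤ |t| * (((c + b) * M * A + M' * RA) / ‖x‖) :=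
          mul_le_mul_of_nonneg_left key (abs_nonneg t)
      _ = (((c + b) * M * A + M' * RA) * |t|) / ‖x‖ := by ring
set_option maxHeartbeats 2000000 in
/-- First-order Coifman–Meyer bounds for the localized Gevrey symbol
`m(ξ,η) = e^{γ(c|ξ+η| - c₁|ξ| - c₂|η|)} φ(ξ/λ₁) φ(η/λ₂)`. -/
theorem stmt_17 (d : ℕ) (hd : 1 ≤ d) (c c₁ c₂ k rA RA : ℝ)
    (hc : 0 < c) (hc₁ : 0 < c₁) (hc₂ : 0 < c₂) (hk : 0 < k)
    (hrA : 0 < rA) (hAR : rA < RA)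
    (φ : EuclideanSpace ℝ (Fin d) → ℝ) (hφ : ContDiff ℝ (⊤ : ℕ∞) φ)
    (hφsupp : tsupport φ ⊆ {x | rA ≤ ‖x‖ ∧ ‖x‖ ≤ RA})
    (hexp : ∀ (lam₁ lam₂ : ℝ), 0 < lam₁ → 0 < lam₂ → lam₁ ≤ k * lam₂ →
      ∀ ξ η : EuclideanSpace ℝ (Fin d),
        rA * lam₁ ≤ ‖ξ‖ → ‖ξ‖ ≤ RA * lam₁ →
        rA * lam₂ ≤ ‖η‖ → ‖η‖ ≤ RA * lam₂ →
        c * ‖ξ + η‖ - c₁ * ‖ξ‖ - c₂ * ‖η‖ ≤ -‖η‖) :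
    ∃ C : ℝ, 0 < C ∧
      ∀ (γ lam₁ lam₂ : ℝ), 0 < γ → 0 < lam₁ → 0 < lam₂ → lam₁ ≤ k * lam₂ →
        let m : EuclideanSpace ℝ (Fin d) → EuclideanSpace ℝ (Fin d) → ℝ :=
          fun ξ η =>
            Real.exp (γ * (c * ‖ξ + η‖ - c₁ * ‖ξ‖ - c₂ * ‖η‖)) *
              φ (lam₁⁻¹ • ξ) * φ (lam₂⁻¹ • η)
        ∀ ξ η : EuclideanSpace ℝ (Fin d),
          ‖fderiv ℝ (fun ξ' => m ξ' η) ξ‖ ≤ C / ‖ξ‖ ∧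
          ‖fderiv ℝ (fun η' => m ξ η') η‖ ≤ C / ‖η‖ := by
  haveI : Nonempty (Fin d) := ⟨⟨0, hd⟩⟩
  haveI : Nontrivial (EuclideanSpace ℝ (Fin d)) := inferInstance
  have hRA : 0 < RA := hrA.trans hAR
  -- bounds on φ and its derivative
  have hcs : HasCompactSupport φ := by
    refine IsCompact.of_isClosed_subset (isCompact_closedBall (0 : EuclideanSpace ℝ (Fin d)) RA)
      (isClosed_tsupport φ) ?_
    intro y hy
    have := (hφsupp hy).2
    simpa [Metric.mem_closedBall, dist_zero_right] using this
  obtain ⟨M0, hM0⟩ := hcs.exists_bound_of_continuous hφ.continuous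
  obtain ⟨M1, hM1⟩ := (hcs.fderiv ℝ).exists_bound_of_continuous (hφ.continuous_fderiv (by simp))
  have hM : ∀ y, |φ y| ≤ M0 := fun y => by
    rw [← Real.norm_eq_abs]; exact hM0 y
  have hM0nn : 0 ≤ M0 := (norm_nonneg _).trans (hM0 0)
  have hM1nn : 0 ≤ M1 := (norm_nonneg _).trans (hM1 0)
  have hq0 : 0 ≤ k * RA / rA := le_of_lt (div_pos (mul_pos hk hRA) hrA)
  -- the constant
  refine ⟨((c + c₁ + c₂) * M0 * (k * RA / rA + 1) + M1 * RA) * M0 + 1, ?_, ?_⟩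
  · have hbody : 0 ≤ ((c + c₁ + c₂) * M0 * (k * RA / rA + 1) + M1 * RA) * M0 :=
      mul_nonneg (add_nonneg (mul_nonneg (mul_nonneg (by linarith) hM0nn) (by linarith))
        (mul_nonneg hM1nn hRA.le)) hM0nn
    linarith
  intro γ lam₁ lam₂ hγ hl1 hl2 hkl
  intro m ξ η
  -- annulus facts
  have hann : ∀ (lam : ℝ), 0 < lam → ∀ z : EuclideanSpace ℝ (Fin d),
      lam⁻¹ • z ∈ tsupport φ → rA * lam ≤ ‖z‖ ∧ ‖z‖ ≤ RA * lam := by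
    intro lam hlam z hz
    have h := hφsupp hz
    have hsm : ‖lam⁻¹ • z‖ = lam⁻¹ * ‖z‖ := by
      rw [norm_smul, Real.norm_eq_abs, abs_of_pos (inv_pos.2 hlam)]
    have h1 := h.1; have h2 := h.2
    rw [hsm] at h1 h2
    have h3 : lam * (lam⁻¹ * ‖z‖) = ‖z‖ := by field_simp
    constructor
    · have := mul_le_mul_of_nonneg_left h1 hlam.le
      nlinarith
    · have := mul_le_mul_of_nonneg_left h2 hlam.le
      nlinarith
  have hgoalnum : ∀ cb Aq t : ℝ, 0 < cb → cb ≤ c + c₁ + c₂ → 0 ≤ Aq →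
      Aq ≤ k * RA / rA + 1 → |t| ≤ M0 →
      ((cb * M0 * Aq + M1 * RA) * |t|)
        ≤ ((c + c₁ + c₂) * M0 * (k * RA / rA + 1) + M1 * RA) * M0 + 1 := by
    intro cb Aq t hcb hcbs hAq hAqs htm
    have hB : 0 ≤ cb * M0 * Aq + M1 * RA :=
      add_nonneg (mul_nonneg (mul_nonneg hcb.le hM0nn) hAq) (mul_nonneg hM1nn hRA.le)
    have h1 : (cb * M0 * Aq + M1 * RA) * |t| ≤ (cb * M0 * Aq + M1 * RA) * M0 :=
      mul_le_mul_of_nonneg_left htm hB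
    have h2 : cb * M0 * Aq ≤ (c + c₁ + c₂) * M0 * (k * RA / rA + 1) := by
      have e1 : 0 ≤ (c + c₁ + c₂ - cb) * M0 * Aq :=
        mul_nonneg (mul_nonneg (by linarith) hM0nn) hAq
      have e2 : 0 ≤ (c + c₁ + c₂) * M0 * ((k * RA / rA + 1) - Aq) :=
        mul_nonneg (mul_nonneg (by linarith) hM0nn) (by linarith)
      nlinarith [e1, e2]
    nlinarith [mul_nonneg hM1nn hRA.le, mul_nonneg hM0nn hM0nn,
      mul_le_mul_of_nonneg_right h2 hM0nn]
  have hdivle : ∀ a b x : ℝ, a ≤ b → 0 ≤ x → a / x ≤ b / x := by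
    intro a b x hab hx
    rcases hx.eq_or_lt with h | h
    · simp [← h]
    · gcongr
  constructor
  · -- derivative in ξ
    have hfun : (fun ξ' => m ξ' η)
        = fun ξ' => Real.exp (γ * (c * ‖ξ' + η‖ - c₁ * ‖ξ'‖ + -(c₂ * ‖η‖))) *
            φ (lam₁⁻¹ • ξ') * φ (lam₂⁻¹ • η) := by
      funext y
      show Real.exp (γ * (c * ‖y + η‖ - c₁ * ‖y‖ - c₂ * ‖η‖)) *
          φ (lam₁⁻¹ • y) * φ (lam₂⁻¹ • η) = _
      rw [show γ * (c * ‖y + η‖ - c₁ * ‖y‖ - c₂ * ‖η‖)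
          = γ * (c * ‖y + η‖ - c₁ * ‖y‖ + -(c₂ * ‖η‖)) from by ring]
    rw [hfun]
    have hδx : lam₁⁻¹ • ξ ∈ tsupport φ → φ (lam₂⁻¹ • η) ≠ 0 → ‖ξ‖ ≤ (k * RA / rA) * ‖η‖ := by
      intro hmem htne
      obtain ⟨_, hx2⟩ := hann lam₁ hl1 ξ hmem
      obtain ⟨hy1, _⟩ := hann lam₂ hl2 η (subset_tsupport φ (Function.mem_support.2 htne))
      have h1 : ‖ξ‖ ≤ RA * (k * lam₂) := by
        have e1 : 0 ≤ RA * (k * lam₂ - lam₁) := mul_nonneg hRA.le (by linarith)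
        nlinarith [e1]
      have h2 : lam₂ ≤ ‖η‖ / rA := by
        rw [le_div_iff₀ hrA, mul_comm]; exact hy1
      have h3 : RA * (k * lam₂) ≤ RA * (k * (‖η‖ / rA)) := by
        have e1 : 0 ≤ RA * k * (‖η‖ / rA - lam₂) :=
          mul_nonneg (mul_nonneg hRA.le hk.le) (by linarith)
        nlinarith [e1]
      have h4 : RA * (k * (‖η‖ / rA)) = (k * RA / rA) * ‖η‖ := by
        field_simp
      linarith
    have hexp' : lam₁⁻¹ • ξ ∈ tsupport φ → φ (lam₂⁻¹ • η) ≠ 0 →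
        c * ‖ξ + η‖ - c₁ * ‖ξ‖ + -(c₂ * ‖η‖) ≤ -‖η‖ := by
      intro hmem htne
      obtain ⟨hx1, hx2⟩ := hann lam₁ hl1 ξ hmem
      obtain ⟨hy1, hy2⟩ := hann lam₂ hl2 η (subset_tsupport φ (Function.mem_support.2 htne))
      have := hexp lam₁ lam₂ hl1 hl2 hkl ξ η hx1 hx2 hy1 hy2
      linarith
    have hb := master_bound φ hφ rA RA M0 M1 hrA hAR hφsupp hM hM1
      γ c c₁ (-(c₂ * ‖η‖)) (k * RA / rA) ‖η‖ lam₁ (φ (lam₂⁻¹ • η)) η ξ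
      hγ hc hc₁ hl1 hq0 hδx hexp'
    refine hb.trans (hdivle _ _ _ ?_ (norm_nonneg ξ))
    exact hgoalnum (c + c₁) (k * RA / rA) _ (by linarith) (by linarith) hq0
      (by linarith) (hM _)
  · -- derivative in η
    have hfun : (fun η' => m ξ η')
        = fun η' => Real.exp (γ * (c * ‖η' + ξ‖ - c₂ * ‖η'‖ + -(c₁ * ‖ξ‖))) *
            φ (lam₂⁻¹ • η') * φ (lam₁⁻¹ • ξ) := by
      funext y
      show Real.exp (γ * (c * ‖ξ + y‖ - c₁ * ‖ξ‖ - c₂ * ‖y‖)) *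
          φ (lam₁⁻¹ • ξ) * φ (lam₂⁻¹ • y) = _
      rw [add_comm ξ y]
      rw [show γ * (c * ‖y + ξ‖ - c₁ * ‖ξ‖ - c₂ * ‖y‖)
          = γ * (c * ‖y + ξ‖ - c₂ * ‖y‖ + -(c₁ * ‖ξ‖)) from by ring]
      ring
    rw [hfun]
    have hδx : lam₂⁻¹ • η ∈ tsupport φ → φ (lam₁⁻¹ • ξ) ≠ 0 → ‖η‖ ≤ 1 * ‖η‖ := by
      intro _ _; rw [one_mul]
    have hexp' : lam₂⁻¹ • η ∈ tsupport φ → φ (lam₁⁻¹ • ξ) ≠ 0 →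
        c * ‖η + ξ‖ - c₂ * ‖η‖ + -(c₁ * ‖ξ‖) ≤ -‖η‖ := by
      intro hmem htne
      obtain ⟨hy1, hy2⟩ := hann lam₂ hl2 η hmem
      obtain ⟨hx1, hx2⟩ := hann lam₁ hl1 ξ (subset_tsupport φ (Function.mem_support.2 htne))
      have h := hexp lam₁ lam₂ hl1 hl2 hkl ξ η hx1 hx2 hy1 hy2
      have hcomm : ‖η + ξ‖ = ‖ξ + η‖ := by rw [add_comm]
      rw [hcomm]
      linarith
    have hb := master_bound φ hφ rA RA M0 M1 hrA hAR hφsupp hM hM1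
      γ c c₂ (-(c₁ * ‖ξ‖)) 1 ‖η‖ lam₂ (φ (lam₁⁻¹ • ξ)) ξ η
      hγ hc hc₂ hl2 zero_le_one hδx hexp'
    refine hb.trans (hdivle _ _ _ ?_ (norm_nonneg η))
    exact hgoalnum (c + c₂) 1 _ (by linarith) (by linarith) zero_le_one
      (by nlinarith) (hM _)
end
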